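/- The nonstandard face subgroup A^3G^3_N = ⟨⋃_{i∈α_3}( Ȳ_i ∪ ⋃_{j∈α_{456}} Z̄^{j*}_{i,j} ∪ ⋃_{j∈α_3} Z̄^j_{i, j−|α_{12}|} )⟩ of Ker(Φ) is isomorphic, as a group, to (∏_{j∈α_3} A_j) × ∏_{i∈α_3} G_i (that is, to A_{α_3} × G_{α_3}). -/

import Mathlib

/-!
Each `φ i` can be straightened into a homomorphism `ψ i : G i →* L` that kills `Y i` and sends
`s j i b` to `b` placed in coordinate `j`: the endomorphism `a ↦ ∏ j, φ i (s j i (a j))` of the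
finitely generated abelian group `L` is onto, hence an automorphism (ℤ-modules of finite type are
Hopfian), and `ψ i` is `φ i` followed by its inverse. The homomorphism `g ↦ ∏ i, ψ i (g i)` then
kills every vector generator.

With `T = α₃`, `e j = j - |α₁₂|` and `f j = j + n`, the isomorphism is
`g ↦ ((ψ (e j) (g (e j)) j)_{j ∈ α₃}, (g i)_{i ∈ α₃})`. It maps the generators onto generators of
`A_{α₃} × G_{α₃}`, and it is injective on the subgroup of vectors killed by `∏ i, ψ i` that lie in
the image of `s j` at `e j` and at `f j` and are trivial at all other coordinates outside `T`: the
coordinates at the `f j` are recovered from `∏ i, ψ i`.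
-/

namespace SB

/-- `cc n p` is the 0-based boundary of the `p`-th label sequence:
`cc n p = ⌈p·n/3⌉` for `p ≤ 3`, and `cc n p = n + ⌈(p-3)·n/3⌉` for `p ≥ 3`. -/
def cc (n p : ℕ) : ℕ := if p < 3 then (p * n + 2) / 3 else n + ((p - 3) * n + 2) / 3

/-- The 0-based label sequence `α_{p+1}` (paper's `α_1,…,α_6` for `p = 0,…,5`)
as a finite set of coordinates in `Fin (2n)`. -/
def alphaF (n p : ℕ) : Finset (Fin (2 * n)) :=
  Finset.univ.filter (fun x => cc n p ≤ x.val ∧ x.val < cc n (p + 1))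

/-- The 0-based label sequence `α_{t+1}` (for `t < 3`) as a finite set of
indices in `Fin n` (indexing the factors `A_j`). -/
def alphaN (n t : ℕ) : Finset (Fin n) :=
  Finset.univ.filter (fun x => cc n t ≤ x.val ∧ x.val < cc n (t + 1))

/-- Reduction of a natural number modulo `2n`, as an element of `Fin (2n)`. -/
def idx {n : ℕ} (hn : 0 < n) (k : ℕ) : Fin (2 * n) := ⟨k % (2 * n), Nat.mod_lt _ (by omega)⟩

/-- Reduction of a natural number modulo `n`, as an element of `Fin n`
(this implements the paper's `j*`). -/
def idxN {n : ℕ} (hn : 0 < n) (k : ℕ) : Fin n := ⟨k % n, Nat.mod_lt _ hn⟩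

/-- The set `Ȳ_i` of vectorized kernel generators: `y ∈ Y i` placed in
coordinate `i` with identity elsewhere. -/
def Ybar {n : ℕ} {G : Fin (2 * n) → Type} [∀ i, Group (G i)]
    (Y : ∀ i, Set (G i)) (i : Fin (2 * n)) : Set (∀ i', G i') :=
  Pi.mulSingle i '' (Y i)

/-- The set `Z̄^j_{i,k}` of vectorized section generators: for `b ∈ A j`, the
element with `s j i b` in coordinate `i`, `s j k b⁻¹` in coordinate `k`, and
identity elsewhere. -/
def Zbar {n : ℕ} {A : Fin n → Type} [∀ j, CommGroup (A j)]
    {G : Fin (2 * n) → Type} [∀ i, Group (G i)]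
    (s : ∀ (j : Fin n) (i : Fin (2 * n)), A j →* G i)
    (j : Fin n) (i k : Fin (2 * n)) : Set (∀ i', G i') :=
  Set.range (fun b : A j => Pi.mulSingle i (s j i b) * Pi.mulSingle k (s j k b⁻¹))


open Function Subgroup

theorem exists_hom_map_section_eq_mulSingle {κ : Type*} [Fintype κ] [DecidableEq κ]
    {A : κ → Type*} [∀ j, CommGroup (A j)] [∀ j, Module.Finite ℤ (Additive (A j))]
    {H : Type*} [Group H] {φ : H →* ∀ j, A j} (hφ : Surjective φ) (σ : ∀ j, A j →* H)
    {Y : Set H} (hY : ∀ y ∈ Y, φ y = 1) (hgen : closure (Y ∪ ⋃ j, Set.range (σ j)) = ⊤) :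
    ∃ ψ : H →* ∀ j, A j, (∀ y ∈ Y, ψ y = 1) ∧ ∀ j b, ψ (σ j b) = Pi.mulSingle j b := by
  let E : (∀ j, A j) →* ∀ j, A j := ∏ j, (φ.comp (σ j)).comp (Pi.evalMonoidHom A j)
  have hE : ∀ j b, E (Pi.mulSingle j b) = φ (σ j b) := by
    intro j b
    simp only [E, MonoidHom.finsetProd_apply, MonoidHom.comp_apply, Pi.evalMonoidHom_apply]
    rw [Fintype.prod_eq_single j fun k hk => by simp [hk], Pi.mulSingle_eq_same]
  have hE_surj : Surjective E := by
    rw [← MonoidHom.range_eq_top, eq_top_iff, ← map_top_of_surjective φ hφ, ← hgen,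
      MonoidHom.map_closure, closure_le]
    rintro _ ⟨g, hg | hg, rfl⟩
    · rw [hY g hg]
      exact one_mem _
    · obtain ⟨j, b, rfl⟩ := Set.mem_iUnion.1 hg
      exact ⟨_, hE j b⟩
  have hE_inj : Injective E :=
    have : Module.Finite ℤ (Additive (∀ j, A j)) :=
      inferInstanceAs (Module.Finite ℤ (∀ j, Additive (A j)))
    OrzechProperty.injective_of_surjective_endomorphism E.toAdditive.toIntLinearMap hE_surj
  let Einv := (MulEquiv.ofBijective E ⟨hE_inj, hE_surj⟩).symm
  refine ⟨Einv.toMonoidHom.comp φ, fun y hy => by simp [hY y hy], fun j b => ?_⟩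
  rw [MonoidHom.comp_apply, ← hE j b]
  exact Einv.apply_symm_apply _

theorem nonempty_mulEquiv_of_map_eq_top {P Q : Type*} [Group P] [Group Q] {H : Subgroup P}
    (F : P →* Q) (hinj : ∀ g ∈ H, F g = 1 → g = 1) (hsurj : H.map F = ⊤) :
    Nonempty (H ≃* Q) := by
  refine ⟨MulEquiv.ofBijective (F.comp H.subtype) ⟨?_, fun q => ?_⟩⟩
  · exact (injective_iff_map_eq_one _).2 fun g hg => Subtype.ext (hinj g g.2 hg)
  · obtain ⟨g, hg, rfl⟩ := hsurj.ge (mem_top q)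
    exact ⟨⟨g, hg⟩, rfl⟩

section FaceSubgroup

variable {κ ι : Type*} {A : κ → Type*} [∀ j, CommGroup (A j)] {G : ι → Type*} [∀ i, Group (G i)]
  (ψ : ∀ i, G i →* ∀ j, A j) (s : ∀ j i, A j →* G i) (Y : ∀ i, Set (G i))
  (T : Finset ι) (J : Finset κ) (e f : κ → ι)

def pairGenerators [DecidableEq ι] (j : κ) (i k : ι) : Set (∀ i, G i) :=
  Set.range fun b : A j => Pi.mulSingle i (s j i b) * Pi.mulSingle k (s j k b⁻¹)

def faceGenerators [DecidableEq ι] : Set (∀ i, G i) :=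
  ⋃ i ∈ T, (Pi.mulSingle i '' Y i ∪ (⋃ j, pairGenerators s j i (f j)) ∪
    ⋃ j ∈ J, pairGenerators s j i (e j))

def sumHom [Fintype ι] : (∀ i, G i) →* ∀ j, A j := ∏ i, (ψ i).comp (Pi.evalMonoidHom G i)

theorem sumHom_apply [Fintype ι] (g : ∀ i, G i) : sumHom ψ g = ∏ i, ψ i (g i) := by
  simp [sumHom, MonoidHom.finsetProd_apply]

theorem sumHom_mulSingle [Fintype ι] [DecidableEq ι] (i : ι) (x : G i) :
    sumHom ψ (Pi.mulSingle i x) = ψ i x := by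
  rw [sumHom_apply, Fintype.prod_eq_single i fun k hk => by simp [hk], Pi.mulSingle_eq_same]

def admissibleSubgroup [Fintype ι] : Subgroup (∀ i, G i) :=
  (sumHom ψ).ker ⊓ (⨅ j ∈ J, (s j (e j)).range.comap (Pi.evalMonoidHom G (e j))) ⊓
    (⨅ j, (s j (f j)).range.comap (Pi.evalMonoidHom G (f j))) ⊓
    ⨅ (k) (_ : k ∉ T) (_ : ∀ j ∈ J, e j ≠ k) (_ : ∀ j, f j ≠ k),
      (⊥ : Subgroup (G k)).comap (Pi.evalMonoidHom G k)

theorem mem_admissibleSubgroup [Fintype ι] {g : ∀ i, G i} :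
    g ∈ admissibleSubgroup ψ s T J e f ↔
      sumHom ψ g = 1 ∧ (∀ j ∈ J, g (e j) ∈ (s j (e j)).range) ∧
        (∀ j, g (f j) ∈ (s j (f j)).range) ∧
        ∀ k ∉ T, (∀ j ∈ J, e j ≠ k) → (∀ j, f j ≠ k) → g k = 1 := by
  simp [admissibleSubgroup, and_assoc]

theorem closure_faceGenerators_le_admissibleSubgroup [Fintype ι] [DecidableEq ι] [DecidableEq κ]
    (hψs : ∀ j i b, ψ i (s j i b) = Pi.mulSingle j b) (hψY : ∀ i, ∀ y ∈ Y i, ψ i y = 1)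
    (heT : ∀ j ∈ J, e j ∉ T) (hfT : ∀ j, f j ∉ T) (he : Set.InjOn e J) (hf : Injective f)
    (hef : ∀ j ∈ J, ∀ j', e j ≠ f j') :
    closure (faceGenerators s Y T J e f) ≤ admissibleSubgroup ψ s T J e f := by
  have hpair : ∀ {j i k} {g : ∀ i, G i}, g ∈ pairGenerators s j i k → sumHom ψ g = 1 := by
    rintro j i k _ ⟨b, rfl⟩
    simp [sumHom_mulSingle, hψs]
  rw [closure_le]
  intro g hg
  simp only [faceGenerators, Set.mem_iUnion, Set.mem_union] at hg
  obtain ⟨i, hi, (⟨y, hy, rfl⟩ | ⟨j₀, b, rfl⟩) | ⟨j₀, hj₀, b, rfl⟩⟩ := hg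
  all_goals
    have hT : ∀ k ∉ T, k ≠ i := fun k hk h => hk (h ▸ hi)
    rw [SetLike.mem_coe, mem_admissibleSubgroup]
  · refine ⟨by rw [sumHom_mulSingle, hψY i y hy], fun j hj => ?_, fun j => ?_, fun k hk _ _ => ?_⟩
    · simp [hT _ (heT j hj)]
    · simp [hT _ (hfT j)]
    · simp [hT k hk]
  · refine ⟨hpair ⟨b, rfl⟩, fun j hj => ?_, fun j => ?_, fun k hk _ hkf => ?_⟩
    · simp [hT _ (heT j hj), hef j hj j₀]
    · by_cases h : j = j₀
      · subst h
        simp [hT _ (hfT j)]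
      · simp [hT _ (hfT j), hf.ne h]
    · simp [hT k hk, (hkf j₀).symm]
  · refine ⟨hpair ⟨b, rfl⟩, fun j hj => ?_, fun j => ?_, fun k hk hke _ => ?_⟩
    · by_cases h : j = j₀
      · subst h
        simp [hT _ (heT j hj)]
      · simp [hT _ (heT j hj), he.ne hj hj₀ h]
    · simp [hT _ (hfT j), (hef j₀ hj₀ j).symm]
    · simp [hT k hk, (hke j₀ hj₀).symm]

def restrictHom : (∀ i, G i) →* (∀ j : J, A j) × ∀ i : T, G i :=
  (MonoidHom.pi fun j : J =>
      (Pi.evalMonoidHom A j).comp ((ψ (e j)).comp (Pi.evalMonoidHom G (e j)))).prod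
    (MonoidHom.pi fun i : T => Pi.evalMonoidHom G i)

theorem restrictHom_apply (g : ∀ i, G i) :
    restrictHom ψ T J e g = (fun j : J => ψ (e j) (g (e j)) j, fun i : T => g i) := rfl

theorem eq_one_of_mem_admissibleSubgroup [Fintype ι] [Fintype κ] [DecidableEq κ]
    (hψs : ∀ j i b, ψ i (s j i b) = Pi.mulSingle j b) (hf : Injective f) {g : ∀ i, G i}
    (hg : g ∈ admissibleSubgroup ψ s T J e f) (h1 : restrictHom ψ T J e g = 1) : g = 1 := by
  obtain ⟨hsum, hge, hgf, hgk⟩ := (mem_admissibleSubgroup ..).1 hg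
  have hT : ∀ i ∈ T, g i = 1 := fun i hi => congrFun (congrArg Prod.snd h1) ⟨i, hi⟩
  have hE : ∀ j ∈ J, g (e j) = 1 := by
    intro j hj
    obtain ⟨a, ha⟩ := hge j hj
    have := congrFun (congrArg Prod.fst h1) ⟨j, hj⟩
    simp only [restrictHom_apply, ← ha, hψs, Pi.mulSingle_eq_same, Prod.fst_one,
      Pi.one_apply] at this
    rw [← ha, this, map_one]
  have hoff : ∀ k ∉ Set.range f, g k = 1 := by
    intro k hk
    by_cases hkT : k ∈ T
    · exact hT k hkT
    by_cases hkE : ∃ j ∈ J, e j = k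
    · obtain ⟨j, hj, rfl⟩ := hkE
      exact hE j hj
    push Not at hkE
    exact hgk k hkT hkE fun j h => hk ⟨j, h⟩
  choose a ha using hgf
  have ha1 : a = 1 :=
    calc a = ∏ j, Pi.mulSingle j (a j) := (Finset.univ_prod_mulSingle a).symm
      _ = ∏ k, ψ k (g k) :=
        Fintype.prod_of_injective f hf _ _ (fun k hk => by rw [hoff k hk, map_one])
          fun j => by rw [← ha, hψs]
      _ = 1 := by rw [← sumHom_apply, hsum]
  funext k
  by_cases hk : k ∈ Set.range f
  · obtain ⟨j, rfl⟩ := hk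
    rw [← ha, ha1, Pi.one_apply, map_one, Pi.one_apply]
  · exact hoff k hk

theorem restrictHom_mulSingle_of_mem [DecidableEq ι] {i : ι} (hi : i ∈ T)
    (heT : ∀ j ∈ J, e j ∉ T) (x : G i) :
    restrictHom ψ T J e (Pi.mulSingle i x) = (1, Pi.mulSingle ⟨i, hi⟩ x) := by
  refine Prod.ext (funext fun j => ?_)
    (update_comp_eq_of_injective' _ Subtype.val_injective ⟨i, hi⟩ x)
  have : e j ≠ i := fun h => heT j j.2 (h ▸ hi)
  simp [restrictHom_apply, this]

theorem restrictHom_mulSingle_of_notMem [DecidableEq ι] {k : ι} (hkT : k ∉ T)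
    (hkE : ∀ j ∈ J, e j ≠ k) (x : G k) : restrictHom ψ T J e (Pi.mulSingle k x) = 1 := by
  refine Prod.ext (funext fun j => ?_) (funext fun i => ?_)
  · simp [restrictHom_apply, hkE j j.2]
  · have : (i : ι) ≠ k := fun h => hkT (h ▸ i.2)
    simp [restrictHom_apply, this]

theorem restrictHom_mulSingle_section [DecidableEq ι] [DecidableEq κ]
    (hψs : ∀ j i b, ψ i (s j i b) = Pi.mulSingle j b)
    (heT : ∀ j ∈ J, e j ∉ T) (he : Set.InjOn e J) {j : κ} (hj : j ∈ J) (b : A j) :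
    restrictHom ψ T J e (Pi.mulSingle (e j) (s j (e j) b)) = (Pi.mulSingle ⟨j, hj⟩ b, 1) := by
  refine Prod.ext (funext fun j' => ?_) (funext fun i => ?_)
  · by_cases h : j' = ⟨j, hj⟩
    · subst h
      simp [restrictHom_apply, hψs]
    · have : e j' ≠ e j := fun h' => h (Subtype.ext (he j'.2 hj h'))
      have h' : (j' : κ) ≠ j := fun h' => h (Subtype.ext h')
      simp [restrictHom_apply, this, h]
  · have : (i : ι) ≠ e j := fun h => heT j hj (h ▸ i.2)
    simp [restrictHom_apply, this]

theorem subset_faceGenerators [DecidableEq ι] {i : ι} (hi : i ∈ T) :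
    Pi.mulSingle i '' Y i ∪ (⋃ j, pairGenerators s j i (f j)) ∪
      (⋃ j ∈ J, pairGenerators s j i (e j)) ⊆ faceGenerators s Y T J e f :=
  fun _ hx => Set.mem_iUnion₂.2 ⟨i, hi, hx⟩

theorem inr_mulSingle_mem_map_closure_faceGenerators [DecidableEq ι]
    (hgen : ∀ i, closure (Y i ∪ ⋃ j, Set.range (s j i)) = ⊤)
    (heT : ∀ j ∈ J, e j ∉ T) (hfT : ∀ j, f j ∉ T) (hef : ∀ j ∈ J, ∀ j', e j ≠ f j')
    (i : T) (x : G i) : ((1, Pi.mulSingle i x) : (∀ j : J, A j) × ∀ i : T, G i) ∈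
      (closure (faceGenerators s Y T J e f)).map (restrictHom ψ T J e) := by
  suffices closure (Y i ∪ ⋃ j, Set.range (s j i)) ≤
      ((closure (faceGenerators s Y T J e f)).map (restrictHom ψ T J e)).comap
        ((MonoidHom.inr _ _).comp (MonoidHom.mulSingle _ i)) from
    this (hgen i ▸ mem_top x)
  rw [closure_le]
  rintro x (hx | hx)
  · refine ⟨_, subset_closure (subset_faceGenerators s Y T J e f i.2 (.inl (.inl ⟨x, hx, rfl⟩))),
      ?_⟩
    simp [restrictHom_mulSingle_of_mem ψ T J e i.2 heT]
  · obtain ⟨j, b, rfl⟩ := Set.mem_iUnion.1 hx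
    refine ⟨_, subset_closure (subset_faceGenerators s Y T J e f i.2
      (.inl (.inr (Set.mem_iUnion.2 ⟨j, b, rfl⟩)))), ?_⟩
    simp [restrictHom_mulSingle_of_mem ψ T J e i.2 heT,
      restrictHom_mulSingle_of_notMem ψ T J e (hfT j) (fun j' hj' => hef j' hj' j)]

theorem map_closure_faceGenerators_eq_top [DecidableEq ι] [DecidableEq κ]
    (hψs : ∀ j i b, ψ i (s j i b) = Pi.mulSingle j b)
    (hgen : ∀ i, closure (Y i ∪ ⋃ j, Set.range (s j i)) = ⊤) (hT : T.Nonempty)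
    (heT : ∀ j ∈ J, e j ∉ T) (hfT : ∀ j, f j ∉ T) (he : Set.InjOn e J)
    (hef : ∀ j ∈ J, ∀ j', e j ≠ f j') :
    (closure (faceGenerators s Y T J e f)).map (restrictHom ψ T J e) = ⊤ := by
  set H := (closure (faceGenerators s Y T J e f)).map (restrictHom ψ T J e)
  have hG := inr_mulSingle_mem_map_closure_faceGenerators ψ s Y T J e f hgen heT hfT hef
  have hA : ∀ (j : J) (b : A j),
      ((Pi.mulSingle j b, 1) : (∀ j : J, A j) × ∀ i : T, G i) ∈ H := by
    rintro ⟨j, hj⟩ b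
    obtain ⟨i, hi⟩ := hT
    have : restrictHom ψ T J e _ ∈ H := mem_map_of_mem _ (subset_closure
      (subset_faceGenerators s Y T J e f hi (.inr (Set.mem_iUnion₂.2 ⟨j, hj, b⁻¹, rfl⟩))))
    rw [map_mul, restrictHom_mulSingle_of_mem ψ T J e hi heT,
      restrictHom_mulSingle_section ψ s T J e hψs heT he hj, inv_inv] at this
    simpa using mul_mem this (inv_mem (hG ⟨i, hi⟩ (s j i b⁻¹)))
  rw [eq_top_iff]
  rintro ⟨a, g⟩ -
  have ha : a ∈ H.comap (MonoidHom.inl _ _) := pi_mem_of_mulSingle_mem a fun j => hA j (a j)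
  have hg : g ∈ H.comap (MonoidHom.inr _ _) := pi_mem_of_mulSingle_mem g fun i => hG i (g i)
  simpa using mul_mem (mem_comap.1 ha) (mem_comap.1 hg)

theorem nonempty_closure_faceGenerators_mulEquiv [Fintype ι] [Fintype κ] [DecidableEq ι]
    [DecidableEq κ] (hψs : ∀ j i b, ψ i (s j i b) = Pi.mulSingle j b)
    (hψY : ∀ i, ∀ y ∈ Y i, ψ i y = 1) (hgen : ∀ i, closure (Y i ∪ ⋃ j, Set.range (s j i)) = ⊤)
    (hT : T.Nonempty) (heT : ∀ j ∈ J, e j ∉ T) (hfT : ∀ j, f j ∉ T) (he : Set.InjOn e J)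
    (hf : Injective f) (hef : ∀ j ∈ J, ∀ j', e j ≠ f j') :
    Nonempty (closure (faceGenerators s Y T J e f) ≃* (∀ j : J, A j) × ∀ i : T, G i) :=
  nonempty_mulEquiv_of_map_eq_top (restrictHom ψ T J e)
    (fun _ hg => eq_one_of_mem_admissibleSubgroup ψ s T J e f hψs hf
      (closure_faceGenerators_le_admissibleSubgroup ψ s Y T J e f hψs hψY heT hfT he hf hef hg))
    (map_closure_faceGenerators_eq_top ψ s Y T J e f hψs hgen hT heT hfT he hef)

end FaceSubgroup

theorem idxN_val {n : ℕ} (hn : 0 < n) (j : Fin n) : idxN hn j.val = j :=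
  Fin.ext (Nat.mod_eq_of_lt j.2)

theorem cc_two (n : ℕ) : cc n 2 = (2 * n + 2) / 3 := rfl

theorem cc_three (n : ℕ) : cc n 3 = n := by simp [cc]

theorem le_two_mul_cc_two (n : ℕ) : n ≤ 2 * cc n 2 := by rw [cc_two]; omega

theorem mem_alphaF_two {n : ℕ} {x : Fin (2 * n)} : x ∈ alphaF n 2 ↔ cc n 2 ≤ x ∧ x < n := by
  simp [alphaF, cc_three]

theorem mem_alphaN_two {n : ℕ} {j : Fin n} : j ∈ alphaN n 2 ↔ cc n 2 ≤ j := by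
  simp [alphaN, cc_three]

theorem alphaF_two_nonempty {n : ℕ} (hn : 3 ≤ n) : (alphaF n 2).Nonempty := by
  have : cc n 2 < n := by rw [cc_two]; omega
  exact ⟨⟨cc n 2, by omega⟩, mem_alphaF_two.2 ⟨le_rfl, this⟩⟩

theorem alphaF_two_eq_image (n : ℕ) :
    alphaF n 2 = (alphaN n 2).image (Fin.castLE (by omega : n ≤ 2 * n)) := by
  ext x
  simp only [mem_alphaF_two, Finset.mem_image, mem_alphaN_two]
  constructor
  · rintro ⟨h1, h2⟩
    exact ⟨⟨x, h2⟩, h1, rfl⟩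
  · rintro ⟨j, hj, rfl⟩
    exact ⟨hj, j.2⟩

-- On `alphaN n 2` these are the paper's coordinates `j - |α₁₂|` and `j + n` (`cc n 2 = |α₁₂|`).
def lowerIdx {n : ℕ} (hn : 0 < n) (j : Fin n) : Fin (2 * n) := idx hn (j.val - cc n 2)

def upperIdx (n : ℕ) (j : Fin n) : Fin (2 * n) := ⟨n + j.val, by omega⟩

theorem lowerIdx_val {n : ℕ} (hn : 0 < n) (j : Fin n) : (lowerIdx hn j).val = j.val - cc n 2 :=
  Nat.mod_eq_of_lt (by omega)

theorem upperIdx_val (n : ℕ) (j : Fin n) : (upperIdx n j).val = n + j.val := rfl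

theorem lowerIdx_notMem_alphaF_two {n : ℕ} (hn : 0 < n) (j : Fin n) :
    lowerIdx hn j ∉ alphaF n 2 := by
  rw [mem_alphaF_two, lowerIdx_val]
  have := le_two_mul_cc_two n
  omega

theorem upperIdx_notMem_alphaF_two (n : ℕ) (j : Fin n) : upperIdx n j ∉ alphaF n 2 := by
  rw [mem_alphaF_two, upperIdx_val]
  omega

theorem injOn_lowerIdx {n : ℕ} (hn : 0 < n) : Set.InjOn (lowerIdx hn) (alphaN n 2) := by
  intro j hj j' hj' h
  have := congrArg Fin.val h
  rw [lowerIdx_val, lowerIdx_val] at this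
  have := mem_alphaN_two.1 hj
  have := mem_alphaN_two.1 hj'
  omega

theorem upperIdx_injective (n : ℕ) : Injective (upperIdx n) :=
  fun j j' h => Fin.ext (by simpa [upperIdx_val] using congrArg Fin.val h)

theorem lowerIdx_ne_upperIdx {n : ℕ} (hn : 0 < n) (j j' : Fin n) :
    lowerIdx hn j ≠ upperIdx n j' := by
  rw [Ne, Fin.ext_iff, lowerIdx_val, upperIdx_val]
  omega

theorem mem_alphaF_upper {n : ℕ} {x : Fin (2 * n)} :
    x ∈ alphaF n 3 ∪ alphaF n 4 ∪ alphaF n 5 ↔ n ≤ x := by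
  have := x.2
  simp [alphaF, cc]
  omega

theorem alphaF_upper_eq_image (n : ℕ) :
    alphaF n 3 ∪ alphaF n 4 ∪ alphaF n 5 = Finset.univ.image (upperIdx n) := by
  ext x
  simp only [mem_alphaF_upper, Finset.mem_image, Finset.mem_univ, true_and, Fin.ext_iff,
    upperIdx_val]
  have := x.2
  exact ⟨fun h => ⟨⟨x - n, by omega⟩, by simp only; omega⟩, fun ⟨j, hj⟩ => by omega⟩

theorem iUnion_alphaF_upper_Zbar {n : ℕ} (hn : 0 < n) {A : Fin n → Type} [∀ j, CommGroup (A j)]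
    {G : Fin (2 * n) → Type} [∀ i, Group (G i)] (s : ∀ (j : Fin n) (i : Fin (2 * n)), A j →* G i)
    (i : Fin (2 * n)) :
    ⋃ j ∈ alphaF n 3 ∪ alphaF n 4 ∪ alphaF n 5, Zbar s (idxN hn j.val) i j =
      ⋃ j, pairGenerators s j i (upperIdx n j) := by
  rw [alphaF_upper_eq_image, Finset.set_biUnion_finset_image]
  simp only [Finset.mem_univ, Set.iUnion_true]
  congr! with j
  exact Fin.ext (by simp [upperIdx_val, idxN, Nat.mod_eq_of_lt j.2])

theorem iUnion_alphaF_two_Zbar {n : ℕ} (hn : 0 < n) {A : Fin n → Type} [∀ j, CommGroup (A j)]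
    {G : Fin (2 * n) → Type} [∀ i, Group (G i)] (s : ∀ (j : Fin n) (i : Fin (2 * n)), A j →* G i)
    (i : Fin (2 * n)) :
    ⋃ j ∈ alphaF n 2, Zbar s (idxN hn j.val) i (idx hn (j.val - cc n 2)) =
      ⋃ j ∈ alphaN n 2, pairGenerators s j i (lowerIdx hn j) := by
  rw [alphaF_two_eq_image, Finset.set_biUnion_finset_image]
  simp only [Fin.val_castLE, idxN_val]
  rfl

theorem stmt_8
    (n : ℕ) (hn : 3 ≤ n)
    (A : Fin n → Type) [∀ j, CommGroup (A j)]
    [∀ j, Module.Finite ℤ (Additive (A j))]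
    (G : Fin (2 * n) → Type) [∀ i, Group (G i)]
    (φ : ∀ i, G i →* (∀ j, A j)) (hφ : ∀ i, Function.Surjective (φ i))
    (s : ∀ (j : Fin n) (i : Fin (2 * n)), A j →* G i)
    (Y : ∀ i, Set (G i))
    (hYker : ∀ i, ∀ y ∈ Y i, φ i y = 1)
    (hYgen : ∀ i, Subgroup.closure (Y i ∪ ⋃ j, Set.range (s j i)) = ⊤)
    :
    Nonempty
      (↥(Subgroup.closure (⋃ i ∈ alphaF n 2,
            (Ybar Y i
              ∪ (⋃ j ∈ alphaF n 3 ∪ alphaF n 4 ∪ alphaF n 5,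
                  Zbar s (idxN (by omega : 0 < n) j.val) i j)
              ∪ ⋃ j ∈ alphaF n 2,
                  Zbar s (idxN (by omega : 0 < n) j.val) i
                    (idx (by omega : 0 < n) (j.val - cc n 2)))))
        ≃* ((∀ j : ↥(alphaN n 2), A j.1) × (∀ i : ↥(alphaF n 2), G i.1))) := by
  have hn0 : 0 < n := by omega
  choose ψ hψY hψs using fun i =>
    exists_hom_map_section_eq_mulSingle (hφ i) (fun j => s j i) (hYker i) (hYgen i)
  rw [show _ = faceGenerators s Y (alphaF n 2) (alphaN n 2) (lowerIdx hn0) (upperIdx n) from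
    Set.iUnion₂_congr fun i _ => by rw [iUnion_alphaF_upper_Zbar, iUnion_alphaF_two_Zbar]; rfl]
  exact nonempty_closure_faceGenerators_mulEquiv ψ s Y (alphaF n 2) (alphaN n 2) (lowerIdx hn0)
    (upperIdx n) (fun j i b => hψs i j b) hψY hYgen (alphaF_two_nonempty hn)
    (fun j _ => lowerIdx_notMem_alphaF_two hn0 j) (upperIdx_notMem_alphaF_two n)
    (injOn_lowerIdx hn0) (upperIdx_injective n) (fun j _ j' => lowerIdx_ne_upperIdx hn0 j j')

end SB
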